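/- In a commutative idempotent involutive residuated lattice, for a negative element a (a ≤ 1) and any x with x ≤ ¬a, one has (x ∨ a) ∧ ¬a = x ∨ 0_a, where 0_a := a ∧ ¬a. -/

import Mathlib

/-- A commutative idempotent involutive residuated lattice. -/
class CIdInRL (α : Type*) extends Lattice α, CommMonoid α, Zero α where
  arrow : α → α → α
  residuation : ∀ x y z : α, x * y ≤ z ↔ y ≤ arrow x z
  idem : ∀ x : α, x * x = x
  involutive : ∀ x : α, arrow (arrow x 0) 0 = x

namespace CIdInRL
variable {α : Type*} [CIdInRL α]
/-- linear negation ¬x := x → 0 -/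
def neg (x : α) : α := arrow x 0
/-- 0_x := x ∧ ¬x -/
def zx (x : α) : α := x ⊓ neg x
/-- 1_x := x ∨ ¬x -/
def ox (x : α) : α := x ⊔ neg x
/-- monoidal order x ⊑ y iff x·y = x -/
def mleq (x y : α) : Prop := x * y = x
end CIdInRL

/-!
Put `t := (x ∨ a) ∧ ¬a`. Idempotence gives `t = t·t ≤ t·(x ∨ a) = t·x ∨ t·a`. Since `a ≤ 1`,
`t·x ≤ (x ∨ a)·x = x ∨ a·x = x`, and `t·a` lies below both `¬a·1 = ¬a` and `¬a·a ≤ a`, hence below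
`0_a`. The reverse inequality is immediate from `x ≤ ¬a`.
-/

namespace CIdInRL
variable {α : Type*} [CIdInRL α]

instance : IsOrderedMonoid α where
  mul_le_mul_left x y h z := by
    rw [mul_comm x, mul_comm y, residuation]
    exact h.trans ((residuation z y (z * y)).mp le_rfl)

theorem mul_sup (x y z : α) : x * (y ⊔ z) = x * y ⊔ x * z := by
  refine le_antisymm ?_ (sup_le (mul_le_mul_right le_sup_left x) (mul_le_mul_right le_sup_right x))
  rw [residuation]
  exact sup_le ((residuation _ _ _).mp le_sup_left) ((residuation _ _ _).mp le_sup_right)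

theorem sup_mul (x y z : α) : (x ⊔ y) * z = x * z ⊔ y * z := by
  simp only [mul_comm _ z, mul_sup]

theorem le_mul_of_le {t y : α} (h : t ≤ y) : t ≤ t * y :=
  (idem t).ge.trans (mul_le_mul_right h t)

theorem mul_neg_le_zero (a : α) : a * neg a ≤ 0 :=
  (residuation a (neg a) 0).mpr le_rfl

theorem le_of_mul_neg_le_zero {u a : α} (h : u * neg a ≤ 0) : u ≤ a := by
  have := (residuation (neg a) u 0).mp (by rwa [mul_comm])
  rwa [neg, involutive] at this

theorem mul_neg_le_self (a : α) : a * neg a ≤ a := by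
  apply le_of_mul_neg_le_zero
  rw [mul_assoc, idem]
  exact mul_neg_le_zero a

theorem sup_mul_le_of_le_one {a : α} (ha : a ≤ 1) (x : α) : (x ⊔ a) * x ≤ x := by
  rw [sup_mul, idem]
  exact sup_le le_rfl (mul_le_of_le_one_left' ha)

theorem mul_le_zx_of_le_neg {a t : α} (ha : a ≤ 1) (ht : t ≤ neg a) : t * a ≤ zx a :=
  le_inf ((mul_le_mul_left ht a).trans (mul_comm a (neg a) ▸ mul_neg_le_self a))
    ((mul_le_of_le_one_right' ha).trans ht)

end CIdInRL

open CIdInRL in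
theorem stmt13 {α : Type*} [CIdInRL α] (a x : α) (ha : a ≤ 1) (hx : x ≤ neg a) :
    (x ⊔ a) ⊓ neg a = x ⊔ zx a := by
  set t := (x ⊔ a) ⊓ neg a
  refine le_antisymm ?_ (sup_le (le_inf le_sup_left hx) (inf_le_inf_right _ le_sup_right))
  calc t ≤ t * (x ⊔ a) := le_mul_of_le inf_le_left
    _ = t * x ⊔ t * a := mul_sup t x a
    _ ≤ x ⊔ zx a :=
      sup_le_sup ((mul_le_mul_left inf_le_left x).trans (sup_mul_le_of_le_one ha x))
        (mul_le_zx_of_le_neg ha inf_le_right)
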